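/- arXiv:1601.05496 — 6 statements merged into one kernel-verified Lean document; each statement's English description precedes it below -/
import Mathlib

section
/- Let σ be a nonnegative locally finite Borel measure on ℝⁿ, 1 < p < ∞, 0 < α < n/p. If the tail integral ∫_1^∞ (σ(B(0,t))/t^{n-αp})^{1/(p-1)} dt/t is finite, then the Wolff potential W_{α,p}σ(x) = ∫_0^∞ (σ(B(x,t))/t^{n-αp})^{1/(p-1)} dt/t is finite for almost every x ∈ ℝⁿ; conversely, if the tail integral is infinite, then W_{α,p}σ(x) = ∞ for every x ∈ ℝⁿ. -/
/-!
Split the integral at `t = 1`. Since `B(x, t) ⊆ B(y, t + |x - y|)` and, for `t ≥ 1`, shifting `t`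
by `|x - y|` changes the weight `t^{-(n - αp)/(p - 1) - 1}` by at most a constant factor, the tail
integral over `t > 1` is finite either for all centres or for none. The integral over `(0, 1]` is
finite at every `x` with `σ(B(x, r)) ≤ C rⁿ` for `r ≤ 1`, where the integrand is
`O(r^{αp/(p - 1) - 1})`; by Besicovitch's differentiation theorem this holds for almost every `x`.
-/

open MeasureTheory Metric Set

/-- The Wolff potential `W_{α,p}σ(x) = ∫_0^∞ (σ(B(x,t))/t^{n-αp})^{1/(p-1)} dt/t`. -/
noncomputable def wolff {n : ℕ} (α p : ℝ)
    (σ : Measure (EuclideanSpace ℝ (Fin n)))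
    (x : EuclideanSpace ℝ (Fin n)) : ENNReal :=
  ∫⁻ t in Ioi (0:ℝ),
    (σ (ball x t) / ENNReal.ofReal (t ^ ((n : ℝ) - α * p))) ^ (1 / (p - 1)) /
      ENNReal.ofReal t

open Filter
open scoped ENNReal Topology

lemma Real.add_rpow_le_one_add_rpow_abs_mul_rpow {t c : ℝ} (ht : 1 ≤ t) (hc : 0 ≤ c) (γ : ℝ) :
    (t + c) ^ γ ≤ (1 + c) ^ |γ| * t ^ γ := by
  have ht0 : 0 < t := by linarith
  rcases le_total 0 γ with hγ | hγ
  · rw [abs_of_nonneg hγ, ← Real.mul_rpow (by linarith) ht0.le]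
    exact Real.rpow_le_rpow (by linarith) (by nlinarith) hγ
  · calc (t + c) ^ γ ≤ t ^ γ := Real.rpow_le_rpow_of_nonpos ht0 (by linarith) hγ
      _ ≤ (1 + c) ^ |γ| * t ^ γ :=
        le_mul_of_one_le_left (by positivity) (Real.one_le_rpow (by linarith) (abs_nonneg γ))

lemma setLIntegral_Ioi_comp_add_right (f : ℝ → ℝ≥0∞) (a c : ℝ) :
    ∫⁻ t in Ioi a, f (t + c) = ∫⁻ t in Ioi (a + c), f t := by
  have h := (measurePreserving_add_right volume c).setLIntegral_comp_preimage_emb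
    (MeasurableEquiv.addRight c).measurableEmbedding f (Ioi (a + c))
  rwa [preimage_add_const_Ioi, add_sub_cancel_right] at h

lemma setLIntegral_Ioi_eq_Ioc_add_Ioi (f : ℝ → ℝ≥0∞) {a b : ℝ} (hab : a ≤ b) :
    ∫⁻ t in Ioi a, f t = (∫⁻ t in Ioc a b, f t) + ∫⁻ t in Ioi b, f t := by
  rw [← Ioc_union_Ioi_eq_Ioi hab]
  exact lintegral_union measurableSet_Ioi (Ioc_disjoint_Ioi le_rfl)

lemma ENNReal.exists_forall_Ioc_le_mul_pow {f : ℝ → ℝ≥0∞} (hf : Monotone f) (hf1 : f 1 ≠ ∞)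
    {A : ℝ≥0∞} (hA : A ≠ ∞) {d : ℕ} (h : ∀ᶠ r in 𝓝[>] 0, f r ≤ A * ENNReal.ofReal (r ^ d)) :
    ∃ C ≠ ∞, ∀ r ∈ Ioc (0:ℝ) 1, f r ≤ C * ENNReal.ofReal (r ^ d) := by
  obtain ⟨ε, hε : 0 < ε, hεsub⟩ := mem_nhdsGT_iff_exists_Ioc_subset.mp h
  have hε0 : ENNReal.ofReal (ε ^ d) ≠ 0 := (ENNReal.ofReal_pos.mpr (pow_pos hε d)).ne'
  set B := f 1 / ENNReal.ofReal (ε ^ d)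
  refine ⟨A + B, ENNReal.add_ne_top.2 ⟨hA, ENNReal.div_ne_top hf1 hε0⟩, fun r hr ↦ ?_⟩
  rcases le_or_gt r ε with hrε | hεr
  · calc f r ≤ A * ENNReal.ofReal (r ^ d) := hεsub ⟨hr.1, hrε⟩
      _ ≤ (A + B) * ENNReal.ofReal (r ^ d) := by gcongr; exact le_self_add
  · calc f r ≤ f 1 := hf hr.2
      _ = B * ENNReal.ofReal (ε ^ d) := (ENNReal.div_mul_cancel hε0 ENNReal.ofReal_ne_top).symm
      _ ≤ (A + B) * ENNReal.ofReal (r ^ d) := by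
        gcongr
        exact le_add_self

section LebesgueDifferentiation

open Module

variable {E : Type*} [NormedAddCommGroup E] [NormedSpace ℝ E] [FiniteDimensional ℝ E]
  [MeasurableSpace E] [BorelSpace E] (μ : Measure E) [μ.IsAddHaarMeasure]
  (σ : Measure E) [IsLocallyFiniteMeasure σ]

lemma ae_eventually_measure_closedBall_le :
    ∀ᵐ x ∂μ, ∃ A ≠ ∞, ∀ᶠ r in 𝓝[>] 0,
      σ (closedBall x r) ≤ A * ENNReal.ofReal (r ^ finrank ℝ E) := by
  filter_upwards [Besicovitch.ae_tendsto_rnDeriv σ μ, σ.rnDeriv_lt_top μ] with x hx hfin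
  set L := σ.rnDeriv μ x
  refine ⟨(L + 1) * μ (ball 0 1), ENNReal.mul_ne_top (by finiteness) measure_ball_lt_top.ne, ?_⟩
  filter_upwards [hx.eventually_lt_const (ENNReal.lt_add_right hfin.ne one_ne_zero),
    self_mem_nhdsWithin] with r hr (hr0 : 0 < r)
  have hvol := μ.addHaar_closedBall x hr0.le
  rw [ENNReal.div_lt_iff (.inl (measure_closedBall_pos μ x hr0).ne')
    (.inl measure_closedBall_lt_top.ne), hvol] at hr
  calc σ (closedBall x r) ≤ (L + 1) * (ENNReal.ofReal (r ^ finrank ℝ E) * μ (ball 0 1)) := hr.le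
    _ = (L + 1) * μ (ball 0 1) * ENNReal.ofReal (r ^ finrank ℝ E) := by ring

lemma ae_exists_forall_Ioc_measure_ball_le :
    ∀ᵐ x ∂μ, ∃ C ≠ ∞, ∀ r ∈ Ioc (0:ℝ) 1,
      σ (ball x r) ≤ C * ENNReal.ofReal (r ^ finrank ℝ E) := by
  filter_upwards [ae_eventually_measure_closedBall_le μ σ] with x ⟨A, hA, hsmall⟩
  obtain ⟨C, hC, hle⟩ := ENNReal.exists_forall_Ioc_le_mul_pow
    (fun _ _ hrs ↦ measure_mono (closedBall_subset_closedBall hrs)) measure_closedBall_lt_top.ne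
    hA hsmall
  exact ⟨C, hC, fun r hr ↦ (measure_mono ball_subset_closedBall).trans (hle r hr)⟩

end LebesgueDifferentiation

section WolffIntegrand

variable {X : Type*} [PseudoMetricSpace X] [MeasurableSpace X]

noncomputable def wolffIntegrand (σ : Measure X) (s q : ℝ) (x : X) (t : ℝ) : ℝ≥0∞ :=
  (σ (ball x t) / ENNReal.ofReal (t ^ s)) ^ q / ENNReal.ofReal t

variable {σ : Measure X} {s q : ℝ}

lemma wolffIntegrand_eq (hq : 0 ≤ q) (x : X) {t : ℝ} (ht : 0 < t) :
    wolffIntegrand σ s q x t = σ (ball x t) ^ q / ENNReal.ofReal (t ^ (s * q + 1)) := by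
  have hts : ENNReal.ofReal (t ^ (s * q)) ≠ 0 := (ENNReal.ofReal_pos.mpr (by positivity)).ne'
  rw [wolffIntegrand, ENNReal.div_rpow_of_nonneg _ _ hq,
    ENNReal.ofReal_rpow_of_pos (by positivity), ← Real.rpow_mul ht.le, Real.rpow_add_one ht.ne',
    ENNReal.ofReal_mul (by positivity), div_eq_mul_inv, div_eq_mul_inv, div_eq_mul_inv,
    mul_assoc, ENNReal.mul_inv (.inl hts) (.inl ENNReal.ofReal_ne_top)]

lemma wolffIntegrand_le_mul_wolffIntegrand_add_dist (hq : 0 ≤ q) (x y : X) {t : ℝ} (ht : 1 ≤ t) :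
    wolffIntegrand σ s q x t ≤
      ENNReal.ofReal ((1 + dist x y) ^ |s * q + 1|) * wolffIntegrand σ s q y (t + dist x y) := by
  set c := dist x y
  set γ := s * q + 1
  set M := ENNReal.ofReal ((1 + c) ^ |γ|)
  have hc : 0 ≤ c := dist_nonneg
  have hM0 : M ≠ 0 := (ENNReal.ofReal_pos.mpr (by positivity)).ne'
  have hball : σ (ball x t) ^ q ≤ σ (ball y (t + c)) ^ q :=
    ENNReal.rpow_le_rpow (measure_mono (ball_subset_ball' le_rfl)) hq
  have hpow : ENNReal.ofReal ((t + c) ^ γ) ≤ M * ENNReal.ofReal (t ^ γ) := by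
    rw [← ENNReal.ofReal_mul (by positivity)]
    exact ENNReal.ofReal_le_ofReal (Real.add_rpow_le_one_add_rpow_abs_mul_rpow ht hc γ)
  rw [wolffIntegrand_eq hq x (by linarith), wolffIntegrand_eq hq y (by linarith)]
  calc σ (ball x t) ^ q / ENNReal.ofReal (t ^ γ)
      = M * σ (ball x t) ^ q / (M * ENNReal.ofReal (t ^ γ)) :=
        (ENNReal.mul_div_mul_left _ _ hM0 ENNReal.ofReal_ne_top).symm
    _ ≤ M * σ (ball y (t + c)) ^ q / ENNReal.ofReal ((t + c) ^ γ) :=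
        ENNReal.div_le_div (mul_le_mul_right hball M) hpow
    _ = M * (σ (ball y (t + c)) ^ q / ENNReal.ofReal ((t + c) ^ γ)) := mul_div_assoc ..

lemma setLIntegral_Ioi_one_wolffIntegrand_le (hq : 0 ≤ q) (x y : X) :
    ∫⁻ t in Ioi 1, wolffIntegrand σ s q x t ≤
      ENNReal.ofReal ((1 + dist x y) ^ |s * q + 1|) * ∫⁻ t in Ioi 1, wolffIntegrand σ s q y t := by
  set M := ENNReal.ofReal ((1 + dist x y) ^ |s * q + 1|)
  calc ∫⁻ t in Ioi 1, wolffIntegrand σ s q x t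
      ≤ ∫⁻ t in Ioi 1, M * wolffIntegrand σ s q y (t + dist x y) :=
        setLIntegral_mono' measurableSet_Ioi fun t ht ↦
          wolffIntegrand_le_mul_wolffIntegrand_add_dist hq x y (le_of_lt ht)
    _ = M * ∫⁻ t in Ioi (1 + dist x y), wolffIntegrand σ s q y t := by
        rw [lintegral_const_mul' _ _ ENNReal.ofReal_ne_top, setLIntegral_Ioi_comp_add_right]
    _ ≤ M * ∫⁻ t in Ioi 1, wolffIntegrand σ s q y t :=
        mul_le_mul_right (lintegral_mono_set (Ioi_subset_Ioi (by simp))) M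

lemma setLIntegral_Ioi_one_wolffIntegrand_eq_top_iff (hq : 0 ≤ q) (x y : X) :
    ∫⁻ t in Ioi 1, wolffIntegrand σ s q x t = ∞ ↔ ∫⁻ t in Ioi 1, wolffIntegrand σ s q y t = ∞ := by
  have key (x y : X) (hx : ∫⁻ t in Ioi 1, wolffIntegrand σ s q x t = ∞) :
      ∫⁻ t in Ioi 1, wolffIntegrand σ s q y t = ∞ := by
    by_contra hy
    have hle := setLIntegral_Ioi_one_wolffIntegrand_le (σ := σ) (s := s) hq x y
    rw [hx, top_le_iff] at hle
    exact ENNReal.mul_ne_top ENNReal.ofReal_ne_top hy hle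
  exact ⟨key x y, key y x⟩

lemma setLIntegral_Ioc_zero_one_wolffIntegrand_lt_top (hq : 0 < q) {x : X} {C : ℝ≥0∞}
    (hC : C ≠ ∞) {d : ℕ} (hs : s < d)
    (hball : ∀ r ∈ Ioc (0:ℝ) 1, σ (ball x r) ≤ C * ENNReal.ofReal (r ^ d)) :
    ∫⁻ t in Ioc 0 1, wolffIntegrand σ s q x t < ∞ := by
  have hbound (t : ℝ) (ht : t ∈ Ioc 0 1) :
      wolffIntegrand σ s q x t ≤ C ^ q * ENNReal.ofReal (t ^ ((d - s) * q - 1)) := by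
    have ht0 := ht.1
    rw [wolffIntegrand_eq hq.le x ht0]
    calc σ (ball x t) ^ q / ENNReal.ofReal (t ^ (s * q + 1))
        ≤ (C * ENNReal.ofReal (t ^ d)) ^ q / ENNReal.ofReal (t ^ (s * q + 1)) := by
          gcongr; exact hball t ht
      _ = C ^ q * ENNReal.ofReal (t ^ ((d - s) * q - 1)) := by
          rw [ENNReal.mul_rpow_of_nonneg _ _ hq.le, mul_div_assoc,
            ENNReal.ofReal_rpow_of_pos (by positivity),
            ← ENNReal.ofReal_div_of_pos (by positivity), ← Real.rpow_natCast,
            ← Real.rpow_mul ht0.le, ← Real.rpow_sub ht0]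
          ring_nf
  have hint : IntegrableOn (fun t : ℝ ↦ t ^ ((d - s) * q - 1)) (Ioc 0 1) :=
    (intervalIntegral.intervalIntegrable_rpow' (by nlinarith)).1
  calc ∫⁻ t in Ioc 0 1, wolffIntegrand σ s q x t
      ≤ ∫⁻ t in Ioc 0 1, C ^ q * ENNReal.ofReal (t ^ ((d - s) * q - 1)) :=
        setLIntegral_mono' measurableSet_Ioc hbound
    _ = C ^ q * ∫⁻ t in Ioc 0 1, ENNReal.ofReal (t ^ ((d - s) * q - 1)) :=
        lintegral_const_mul' _ _ (ENNReal.rpow_ne_top_of_nonneg hq.le hC)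
    _ < ∞ := ENNReal.mul_lt_top (ENNReal.rpow_lt_top_of_nonneg hq.le hC) hint.setLIntegral_lt_top

end WolffIntegrand

theorem stmt0_general {n : ℕ} (α p : ℝ) (σ : Measure (EuclideanSpace ℝ (Fin n)))
    [IsLocallyFiniteMeasure σ]
    (hp : 1 < p) (hα : 0 < α) :
    ((∫⁻ t in Ioi (1:ℝ),
        (σ (ball (0 : EuclideanSpace ℝ (Fin n)) t) /
          ENNReal.ofReal (t ^ ((n : ℝ) - α * p))) ^ (1 / (p - 1)) /
          ENNReal.ofReal t) < ⊤ →
      ∀ᵐ x ∂(volume : Measure (EuclideanSpace ℝ (Fin n))), wolff α p σ x < ⊤) ∧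
    ((∫⁻ t in Ioi (1:ℝ),
        (σ (ball (0 : EuclideanSpace ℝ (Fin n)) t) /
          ENNReal.ofReal (t ^ ((n : ℝ) - α * p))) ^ (1 / (p - 1)) /
          ENNReal.ofReal t) = ⊤ →
      ∀ x, wolff α p σ x = ⊤) := by
  have hq : 0 < 1 / (p - 1) := one_div_pos.mpr (by linarith)
  have hs : (n : ℝ) - α * p < Module.finrank ℝ (EuclideanSpace ℝ (Fin n)) := by
    rw [finrank_euclideanSpace_fin]
    linarith [mul_pos hα (by linarith : (0:ℝ) < p)]
  set W := wolffIntegrand σ (n - α * p) (1 / (p - 1))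
  have hsplit (x) : wolff α p σ x = (∫⁻ t in Ioc 0 1, W x t) + ∫⁻ t in Ioi 1, W x t :=
    setLIntegral_Ioi_eq_Ioc_add_Ioi (W x) zero_le_one
  refine ⟨fun htail ↦ ?_, fun htail x ↦ ?_⟩
  · filter_upwards [ae_exists_forall_Ioc_measure_ball_le volume σ] with x ⟨C, hC, hball⟩
    have hfar := (setLIntegral_Ioi_one_wolffIntegrand_eq_top_iff hq.le x 0).not.2 htail.ne
    rw [hsplit]
    exact ENNReal.add_lt_top.2
      ⟨setLIntegral_Ioc_zero_one_wolffIntegrand_lt_top hq hC hs hball, lt_top_iff_ne_top.2 hfar⟩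
  · rw [hsplit, (setLIntegral_Ioi_one_wolffIntegrand_eq_top_iff hq.le x 0).2 htail,
      add_top]

theorem stmt0 {n : ℕ} (α p : ℝ) (σ : Measure (EuclideanSpace ℝ (Fin n)))
    [IsLocallyFiniteMeasure σ]
    (hp : 1 < p) (hα : 0 < α) (hαn : α < n / p) :
    ((∫⁻ t in Ioi (1:ℝ),
        (σ (ball (0 : EuclideanSpace ℝ (Fin n)) t) /
          ENNReal.ofReal (t ^ ((n : ℝ) - α * p))) ^ (1 / (p - 1)) /
          ENNReal.ofReal t) < ⊤ →
      ∀ᵐ x ∂(volume : Measure (EuclideanSpace ℝ (Fin n))), wolff α p σ x < ⊤) ∧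
    ((∫⁻ t in Ioi (1:ℝ),
        (σ (ball (0 : EuclideanSpace ℝ (Fin n)) t) /
          ENNReal.ofReal (t ^ ((n : ℝ) - α * p))) ^ (1 / (p - 1)) /
          ENNReal.ofReal t) = ⊤ →
      ∀ x, wolff α p σ x = ⊤) :=
  stmt0_general α p σ hp hα
end

section
/- Let σ be a nonnegative locally finite Borel measure on ℝⁿ and s > 0. Suppose that for every compact set E ⊂ ℝⁿ one has ∫_E (W_{α,p}σ_E)^s dσ ≤ c₀ σ(E), where σ_E is the restriction of σ to E. Then there is a constant C such that σ(E) ≤ C cap_{α,p}(E) for all compact sets E. (Proof idea: write σ(E) = ∫_E (W_{α,p}σ_E)^{-β}(W_{α,p}σ_E)^β dσ, apply Hölder with exponents r = 1 + (p-1)/s, r' = (s+p-1)/s, choosing β = s(p-1)/(s+p-1), and use the known estimate ∫_E (W_{α,p}σ_E)^{-(p-1)} dσ ≤ c cap_{α,p}(E).) -/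
/-!
Split a compact set `E` according to whether `W = W_{α,p}σ_E` is above or below the level `L`
with `L ^ s = c₀ + 1`. By Chebyshev's inequality, the hypothesis on `∫_E W ^ s` makes the upper
part carry at most the fraction `c₀ / (c₀ + 1)` of `σ(E)`, while the estimate
`∫_E W ^ (-(p-1)) ≤ c₁ cap_{α,p}(E)` bounds the lower part by `L ^ (p-1) c₁ cap_{α,p}(E)`.
Absorbing the first part into the left-hand side gives
`σ(E) ≤ (c₀ + 1) ^ (1 + (p-1)/s) c₁ cap_{α,p}(E)`.
-/

open MeasureTheory Metric Set

/-- The Riesz potential `I_α μ(x) = ∫_0^∞ μ(B(x,r))/r^{n-α} dr/r`. -/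
noncomputable def riesz {n : ℕ} (α : ℝ)
    (μ : Measure (EuclideanSpace ℝ (Fin n)))
    (x : EuclideanSpace ℝ (Fin n)) : ENNReal :=
  ∫⁻ r in Ioi (0:ℝ),
    μ (ball x r) / ENNReal.ofReal (r ^ ((n : ℝ) - α)) / ENNReal.ofReal r

/-- The `(α,p)`-capacity `cap_{α,p}(E) = inf { ‖f‖_{L^p}^p : I_α f ≥ 1 on E, f ≥ 0 }`. -/
noncomputable def capa {n : ℕ} (α p : ℝ) (E : Set (EuclideanSpace ℝ (Fin n))) : ENNReal :=
  sInf { c | ∃ f : EuclideanSpace ℝ (Fin n) → ENNReal, Measurable f ∧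
    (∀ x ∈ E, 1 ≤ riesz α (volume.withDensity f) x) ∧
    c = ∫⁻ x, (f x) ^ p }

open scoped ENNReal

section Chebyshev

variable {X : Type*} [MeasurableSpace X] {ν : Measure X} {f : X → ℝ≥0∞}

lemma mul_meas_ge_le_lintegral_rpow (hf : Measurable f) {s : ℝ} (hs : 0 ≤ s) (L : ℝ≥0∞) :
    L ^ s * ν {x | L ≤ f x} ≤ ∫⁻ x, f x ^ s ∂ν :=
  calc L ^ s * ν {x | L ≤ f x} ≤ L ^ s * ν {x | L ^ s ≤ f x ^ s} :=
        mul_le_mul_right (measure_mono fun _ hx => ENNReal.rpow_le_rpow hx hs) _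
    _ ≤ ∫⁻ x, f x ^ s ∂ν := mul_meas_ge_le_lintegral (hf.pow_const s) _

lemma mul_meas_le_le_lintegral_rpow_neg (hf : Measurable f) {q : ℝ} (hq : 0 ≤ q) (L : ℝ≥0∞) :
    L ^ (-q) * ν {x | f x ≤ L} ≤ ∫⁻ x, f x ^ (-q) ∂ν :=
  calc L ^ (-q) * ν {x | f x ≤ L} ≤ L ^ (-q) * ν {x | L ^ (-q) ≤ f x ^ (-q)} := by
        refine mul_le_mul_right (measure_mono fun x hx => ?_) _
        show L ^ (-q) ≤ f x ^ (-q)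
        rw [ENNReal.rpow_neg, ENNReal.rpow_neg]
        exact ENNReal.inv_le_inv.2 (ENNReal.rpow_le_rpow hx hq)
    _ ≤ ∫⁻ x, f x ^ (-q) ∂ν := mul_meas_ge_le_lintegral (hf.pow_const (-q)) _

lemma measure_univ_le_of_lintegral_rpow_le [IsFiniteMeasure ν] (hf : Measurable f)
    {s q : ℝ} (hs : 0 < s) (hq : 0 ≤ q) {c K : ℝ≥0∞} (hc : c ≠ ∞)
    (h_pos : ∫⁻ x, f x ^ s ∂ν ≤ c * ν univ) (h_neg : ∫⁻ x, f x ^ (-q) ∂ν ≤ K) :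
    ν univ ≤ (c + 1) ^ (1 + q / s) * K := by
  set L : ℝ≥0∞ := (c + 1) ^ s⁻¹
  have hc1 : c + 1 ≠ ∞ := ENNReal.add_ne_top.2 ⟨hc, ENNReal.one_ne_top⟩
  have hL_pow : L ^ s = c + 1 := ENNReal.rpow_inv_rpow hs.ne' _
  have hL0 : L ≠ 0 := (ENNReal.rpow_pos (by simp) hc1).ne'
  have hLT : L ≠ ∞ := ENNReal.rpow_ne_top_of_nonneg (inv_nonneg.2 hs.le) hc1
  have h_upper : (c + 1) * ν {x | L ≤ f x} ≤ c * ν univ :=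
    hL_pow ▸ (mul_meas_ge_le_lintegral_rpow hf hs.le L).trans h_pos
  have h_lower : ν {x | f x ≤ L} ≤ L ^ q * K := by
    have := (mul_meas_le_le_lintegral_rpow_neg hf hq L).trans h_neg
    rwa [ENNReal.rpow_neg, ENNReal.inv_mul_le_iff (by simp [hL0, hLT]) (by simp [hL0, hLT])] at this
  have h_split : ν univ ≤ ν {x | L ≤ f x} + ν {x | f x ≤ L} :=
    (measure_mono fun x _ => (le_total L (f x)).elim Or.inl Or.inr).trans (measure_union_le _ _)
  have h_absorb : c * ν univ + ν univ ≤ c * ν univ + (c + 1) * ν {x | f x ≤ L} :=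
    calc c * ν univ + ν univ = (c + 1) * ν univ := by ring
      _ ≤ (c + 1) * ν {x | L ≤ f x} + (c + 1) * ν {x | f x ≤ L} := by
        rw [← mul_add]; exact mul_le_mul_right h_split _
      _ ≤ c * ν univ + (c + 1) * ν {x | f x ≤ L} := add_le_add_left h_upper _
  calc ν univ ≤ (c + 1) * ν {x | f x ≤ L} :=
        (ENNReal.add_le_add_iff_left (ENNReal.mul_ne_top hc (measure_ne_top _ _))).1 h_absorb
    _ ≤ (c + 1) * (L ^ q * K) := mul_le_mul_right h_lower _
    _ = (c + 1) ^ (1 + q / s) * K := by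
        rw [← mul_assoc, ← ENNReal.rpow_mul, ENNReal.rpow_add _ _ (by simp) hc1, ENNReal.rpow_one,
          inv_mul_eq_div]

end Chebyshev

lemma measurable_measure_ball {X : Type*} [PseudoMetricSpace X] [SecondCountableTopology X]
    [MeasurableSpace X] [BorelSpace X] (μ : Measure X) [SFinite μ] :
    Measurable fun q : X × ℝ => μ (ball q.1 q.2) := by
  have hS : MeasurableSet {r : (X × ℝ) × X | dist r.2 r.1.1 < r.1.2} :=
    measurableSet_lt (by fun_prop) (by fun_prop)
  exact measurable_measure_prodMk_left hS

lemma measurable_wolff {n : ℕ} (α p : ℝ) (μ : Measure (EuclideanSpace ℝ (Fin n))) [SFinite μ] :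
    Measurable (wolff α p μ) := by
  refine Measurable.lintegral_prod_right' (f := fun q : EuclideanSpace ℝ (Fin n) × ℝ =>
    (μ (ball q.1 q.2) / ENNReal.ofReal (q.2 ^ ((n : ℝ) - α * p))) ^ (1 / (p - 1)) /
      ENNReal.ofReal q.2) ?_
  have : Measurable fun t : ℝ => ENNReal.ofReal (t ^ ((n : ℝ) - α * p)) := by fun_prop
  exact (((measurable_measure_ball μ).div (this.comp measurable_snd)).pow_const _).div
    (ENNReal.measurable_ofReal.comp measurable_snd)

theorem stmt2_general {n : ℕ} (α p s : ℝ) (σ : Measure (EuclideanSpace ℝ (Fin n)))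
    [IsLocallyFiniteMeasure σ]
    (hp : 1 < p) (hs : 0 < s)
    (c₀ : ENNReal) (hc₀ : c₀ ≠ ⊤)
    (hyp : ∀ E : Set (EuclideanSpace ℝ (Fin n)), IsCompact E →
      (∫⁻ x in E, (wolff α p (σ.restrict E) x) ^ s ∂σ) ≤ c₀ * σ E)
    -- Theorem 1.11 of [V1], assumed as known input:
    (c₁ : ENNReal) (hc₁ : c₁ ≠ ⊤)
    (hknown : ∀ E : Set (EuclideanSpace ℝ (Fin n)), IsCompact E → 0 < σ E →
      (∫⁻ x in E, (wolff α p (σ.restrict E) x) ^ (-(p - 1)) ∂σ) ≤ c₁ * capa α p E) :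
    ∃ C : ENNReal, C ≠ ⊤ ∧
      ∀ E : Set (EuclideanSpace ℝ (Fin n)), IsCompact E → σ E ≤ C * capa α p E := by
  have hq : 0 ≤ p - 1 := sub_nonneg.2 hp.le
  refine ⟨(c₀ + 1) ^ (1 + (p - 1) / s) * c₁, ?_, fun E hE => ?_⟩
  · exact ENNReal.mul_ne_top (ENNReal.rpow_ne_top_of_nonneg (by positivity) (by simp [hc₀])) hc₁
  rcases eq_or_ne (σ E) 0 with hE0 | hE0
  · simp [hE0]
  have : IsFiniteMeasure (σ.restrict E) := isFiniteMeasure_restrict.2 hE.measure_lt_top.ne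
  have key := measure_univ_le_of_lintegral_rpow_le (ν := σ.restrict E)
    (measurable_wolff α p (σ.restrict E)) hs hq hc₀
    (by rw [Measure.restrict_apply_univ]; exact hyp E hE) (hknown E hE (pos_iff_ne_zero.2 hE0))
  rwa [Measure.restrict_apply_univ, ← mul_assoc] at key

theorem stmt2 {n : ℕ} (α p s : ℝ) (σ : Measure (EuclideanSpace ℝ (Fin n)))
    [IsLocallyFiniteMeasure σ]
    (hp : 1 < p) (hα : 0 < α) (hαn : α < n / p) (hs : 0 < s)
    (c₀ : ENNReal) (hc₀ : c₀ ≠ ⊤)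
    (hyp : ∀ E : Set (EuclideanSpace ℝ (Fin n)), IsCompact E →
      (∫⁻ x in E, (wolff α p (σ.restrict E) x) ^ s ∂σ) ≤ c₀ * σ E)
    -- Theorem 1.11 of [V1], assumed as known input:
    (c₁ : ENNReal) (hc₁ : c₁ ≠ ⊤)
    (hknown : ∀ E : Set (EuclideanSpace ℝ (Fin n)), IsCompact E → 0 < σ E →
      (∫⁻ x in E, (wolff α p (σ.restrict E) x) ^ (-(p - 1)) ∂σ) ≤ c₁ * capa α p E) :
    ∃ C : ENNReal, C ≠ ⊤ ∧
      ∀ E : Set (EuclideanSpace ℝ (Fin n)), IsCompact E → σ E ≤ C * capa α p E :=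
  stmt2_general α p s σ hp hs c₀ hc₀ hyp c₁ hc₁ hknown
end

section
/- Let 0 < q < p-1, 1 < p < ∞, 0 < α < n/p, and let σ be a nonnegative locally finite Borel measure on ℝⁿ. Suppose u is a nonnegative function satisfying u ≥ W_{α,p}(u^q dσ), the lower bound u ≥ c⁻¹ (W_{α,p}σ)^{(p-1)/(p-1-q)}, and the upper bound u ≤ c (W_{α,p}σ + (W_{α,p}σ)^{(p-1)/(p-1-q)}) < ∞ a.e., with u not identically zero. Then W_{α,p}((W_{α,p}σ)^{(p-1)q/(p-1-q)} dσ) ≤ κ (W_{α,p}σ + (W_{α,p}σ)^{(p-1)/(p-1-q)}) a.e., where κ depends only on p, q, c. -/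
/-! The lower bound on `u` gives `(W_{α,p}σ)^{(p-1)q/(p-1-q)} ≤ c^q u^q` pointwise. The Wolff
potential is monotone in the measure and scales by `k^{1/(p-1)}` under `σ ↦ k • σ`, so the
potential of the left-hand density is at most `c^{q/(p-1)} W_{α,p}(u^q dσ) ≤ c^{q/(p-1)} u`, and
the upper bound on `u` finishes the proof with `κ = c^{q/(p-1)} c`. -/

open MeasureTheory Metric Set

section Wolff

variable {n : ℕ} {α p : ℝ}

lemma wolff_mono (hp : 1 ≤ p) {σ τ : Measure (EuclideanSpace ℝ (Fin n))} (h : σ ≤ τ)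
    (x : EuclideanSpace ℝ (Fin n)) : wolff α p σ x ≤ wolff α p τ x := by
  have hexp : (0 : ℝ) ≤ 1 / (p - 1) := one_div_nonneg.2 (sub_nonneg.2 hp)
  refine lintegral_mono fun t => ?_
  have hball : σ (ball x t) ≤ τ (ball x t) := h _
  gcongr

lemma wolff_smul (hp : 1 ≤ p) {k : ENNReal} (hk : k ≠ ⊤)
    (σ : Measure (EuclideanSpace ℝ (Fin n))) (x : EuclideanSpace ℝ (Fin n)) :
    wolff α p (k • σ) x = k ^ (1 / (p - 1)) * wolff α p σ x := by
  have hexp : (0 : ℝ) ≤ 1 / (p - 1) := one_div_nonneg.2 (sub_nonneg.2 hp)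
  unfold wolff
  rw [← lintegral_const_mul' _ _ (ENNReal.rpow_ne_top_of_nonneg hexp hk)]
  refine lintegral_congr fun t => ?_
  rw [Measure.smul_apply, smul_eq_mul, mul_div_assoc, ENNReal.mul_rpow_of_nonneg _ _ hexp,
    mul_div_assoc]

end Wolff

lemma ENNReal.rpow_le_rpow_mul_rpow_of_inv_mul_le {a b c : ENNReal} (hc0 : c ≠ 0) (hc : c ≠ ⊤)
    (h : c⁻¹ * a ≤ b) {q : ℝ} (hq : 0 ≤ q) : a ^ q ≤ c ^ q * b ^ q := by
  rw [← ENNReal.mul_rpow_of_nonneg _ _ hq]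
  exact ENNReal.rpow_le_rpow ((ENNReal.inv_mul_le_iff hc0 hc).1 h) hq

theorem stmt5_general {n : ℕ} (α p q : ℝ) (σ : Measure (EuclideanSpace ℝ (Fin n)))
    (hp : 1 < p) (hq : 0 < q)
    (u : EuclideanSpace ℝ (Fin n) → ENNReal)
    (c : ENNReal) (hc : 0 < c) (hc' : c ≠ ⊤)
    (hsuper : ∀ x, wolff α p (σ.withDensity fun y => (u y) ^ q) x ≤ u x)
    (hlow : ∀ x, c⁻¹ * (wolff α p σ x) ^ ((p - 1) / (p - 1 - q)) ≤ u x)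
    (hup : ∀ᵐ x ∂(volume : Measure (EuclideanSpace ℝ (Fin n))),
      u x ≤ c * (wolff α p σ x + (wolff α p σ x) ^ ((p - 1) / (p - 1 - q))) ∧
      c * (wolff α p σ x + (wolff α p σ x) ^ ((p - 1) / (p - 1 - q))) < ⊤) :
    ∃ κ : ENNReal, 0 < κ ∧ κ ≠ ⊤ ∧
      ∀ᵐ x ∂(volume : Measure (EuclideanSpace ℝ (Fin n))),
        wolff α p (σ.withDensity fun y => (wolff α p σ y) ^ ((p - 1) * q / (p - 1 - q))) x
          ≤ κ * (wolff α p σ x + (wolff α p σ x) ^ ((p - 1) / (p - 1 - q))) := by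
  have hcq : c ^ q ≠ ⊤ := ENNReal.rpow_ne_top_of_nonneg hq.le hc'
  have hdens : ∀ y,
      (wolff α p σ y) ^ ((p - 1) * q / (p - 1 - q)) ≤ (c ^ q • fun y => u y ^ q) y :=
    fun y => by
      rw [mul_div_right_comm, ENNReal.rpow_mul]
      exact ENNReal.rpow_le_rpow_mul_rpow_of_inv_mul_le hc.ne' hc' (hlow y) hq.le
  refine ⟨(c ^ q) ^ (1 / (p - 1)) * c,
    ENNReal.mul_pos (ENNReal.rpow_pos (ENNReal.rpow_pos hc hc') hcq).ne' hc.ne',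
    ENNReal.mul_ne_top (ENNReal.rpow_ne_top_of_nonneg (by positivity) hcq) hc', ?_⟩
  filter_upwards [hup] with x hx
  calc wolff α p (σ.withDensity fun y => (wolff α p σ y) ^ ((p - 1) * q / (p - 1 - q))) x
      ≤ wolff α p (σ.withDensity (c ^ q • fun y => u y ^ q)) x :=
        wolff_mono hp.le (withDensity_mono (.of_forall hdens)) x
    _ = (c ^ q) ^ (1 / (p - 1)) * wolff α p (σ.withDensity fun y => u y ^ q) x := by
        rw [withDensity_smul' _ _ hcq, wolff_smul hp.le hcq]
    _ ≤ (c ^ q) ^ (1 / (p - 1)) *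
          (c * (wolff α p σ x + (wolff α p σ x) ^ ((p - 1) / (p - 1 - q)))) :=
        mul_le_mul_right ((hsuper x).trans hx.1) _
    _ = _ := (mul_assoc _ _ _).symm

theorem stmt5 {n : ℕ} (α p q : ℝ) (σ : Measure (EuclideanSpace ℝ (Fin n)))
    [IsLocallyFiniteMeasure σ]
    (hp : 1 < p) (hα : 0 < α) (hαn : α < n / p) (hq : 0 < q) (hqp : q < p - 1)
    (u : EuclideanSpace ℝ (Fin n) → ENNReal)
    (c : ENNReal) (hc : 0 < c) (hc' : c ≠ ⊤)
    (hsuper : ∀ x, wolff α p (σ.withDensity fun y => (u y) ^ q) x ≤ u x)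
    (hlow : ∀ x, c⁻¹ * (wolff α p σ x) ^ ((p - 1) / (p - 1 - q)) ≤ u x)
    (hup : ∀ᵐ x ∂(volume : Measure (EuclideanSpace ℝ (Fin n))),
      u x ≤ c * (wolff α p σ x + (wolff α p σ x) ^ ((p - 1) / (p - 1 - q))) ∧
      c * (wolff α p σ x + (wolff α p σ x) ^ ((p - 1) / (p - 1 - q))) < ⊤)
    (hnz : ∃ x, u x ≠ 0) :
    ∃ κ : ENNReal, 0 < κ ∧ κ ≠ ⊤ ∧
      ∀ᵐ x ∂(volume : Measure (EuclideanSpace ℝ (Fin n))),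
        wolff α p (σ.withDensity fun y => (wolff α p σ y) ^ ((p - 1) * q / (p - 1 - q))) x
          ≤ κ * (wolff α p σ x + (wolff α p σ x) ^ ((p - 1) / (p - 1 - q))) :=
  stmt5_general α p q σ hp hq u c hc hc' hsuper hlow hup
end

section
/- Let 0 < q < 1, 0 < 2α < n, and let σ be a nonnegative locally finite Borel measure on ℝⁿ. For every x ≠ 0, ∫_{|y|<|x|} (∫_{|y|≤|z|<|x|} dσ(z)/|z|^{n-2α})^{q/(1-q)} dσ(y) ≤ (∫_{|y|<|x|} dσ(y)/|y|^{(n-2α)q})^{1/(1-q)}. -/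
open MeasureTheory Metric Set

theorem stmt9 {n : ℕ} (α q : ℝ) (σ : Measure (EuclideanSpace ℝ (Fin n)))
    [IsLocallyFiniteMeasure σ]
    (hq : 0 < q) (hq1 : q < 1) (hα : 0 < α) (hαn : 2 * α < n) :
    ∀ R : ℝ, 0 < R →
      (∫⁻ y in ball (0 : EuclideanSpace ℝ (Fin n)) R,
          (∫⁻ z in {z : EuclideanSpace ℝ (Fin n) | ‖y‖ ≤ ‖z‖ ∧ ‖z‖ < R},
            (ENNReal.ofReal (‖z‖ ^ ((n : ℝ) - 2 * α)))⁻¹ ∂σ) ^ (q / (1 - q)) ∂σ)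
        ≤ (∫⁻ y in ball (0 : EuclideanSpace ℝ (Fin n)) R,
            (ENNReal.ofReal (‖y‖ ^ (((n : ℝ) - 2 * α) * q)))⁻¹ ∂σ) ^ (1 / (1 - q)) := by
  intro R hR
  set γ : ℝ := (n : ℝ) - 2 * α with hγdef
  have hγ : 0 < γ := by simp only [hγdef]; linarith
  have h1q : 0 < 1 - q := by linarith
  set p : ℝ := q / (1 - q) with hpdef
  have hp : 0 < p := div_pos hq h1q
  have hexp : γ * (1 - q) * p = γ * q := by
    rw [hpdef]; field_simp
  set A : ENNReal := ∫⁻ y in ball (0 : EuclideanSpace ℝ (Fin n)) R,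
      (ENNReal.ofReal (‖y‖ ^ (γ * q)))⁻¹ ∂σ with hA
  have hmeas : Measurable fun z : EuclideanSpace ℝ (Fin n) =>
      (ENNReal.ofReal (‖z‖ ^ (γ * q)))⁻¹ := by
    apply Measurable.inv
    exact (measurable_norm.pow_const _).ennreal_ofReal
  have step1 : ∀ y : EuclideanSpace ℝ (Fin n),
      (∫⁻ z in {z : EuclideanSpace ℝ (Fin n) | ‖y‖ ≤ ‖z‖ ∧ ‖z‖ < R},
          (ENNReal.ofReal (‖z‖ ^ γ))⁻¹ ∂σ)
        ≤ (ENNReal.ofReal (‖y‖ ^ (γ * (1 - q))))⁻¹ * A := by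
    intro y
    have hS : MeasurableSet {z : EuclideanSpace ℝ (Fin n) | ‖y‖ ≤ ‖z‖ ∧ ‖z‖ < R} := by
      apply MeasurableSet.inter
      · exact measurableSet_le measurable_const measurable_norm
      · exact measurableSet_lt measurable_norm measurable_const
    calc ∫⁻ z in {z : EuclideanSpace ℝ (Fin n) | ‖y‖ ≤ ‖z‖ ∧ ‖z‖ < R},
            (ENNReal.ofReal (‖z‖ ^ γ))⁻¹ ∂σ
        ≤ ∫⁻ z in {z : EuclideanSpace ℝ (Fin n) | ‖y‖ ≤ ‖z‖ ∧ ‖z‖ < R},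
            (ENNReal.ofReal (‖y‖ ^ (γ * (1 - q))))⁻¹ *
              (ENNReal.ofReal (‖z‖ ^ (γ * q)))⁻¹ ∂σ := by
          apply setLIntegral_mono' hS
          intro z hz
          have hyz : ‖y‖ ≤ ‖z‖ := hz.1
          have key : ‖z‖ ^ (γ * q) * ‖y‖ ^ (γ * (1 - q)) ≤ ‖z‖ ^ γ := by
            have h1 : ‖y‖ ^ (γ * (1 - q)) ≤ ‖z‖ ^ (γ * (1 - q)) :=
              Real.rpow_le_rpow (norm_nonneg y) hyz (by positivity)
            calc ‖z‖ ^ (γ * q) * ‖y‖ ^ (γ * (1 - q))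
                ≤ ‖z‖ ^ (γ * q) * ‖z‖ ^ (γ * (1 - q)) := by
                  apply mul_le_mul_of_nonneg_left h1 (by positivity)
              _ = ‖z‖ ^ (γ * q + γ * (1 - q)) := by
                  rw [Real.rpow_add' (norm_nonneg z) (by nlinarith)]
              _ = ‖z‖ ^ γ := by ring_nf
          calc (ENNReal.ofReal (‖z‖ ^ γ))⁻¹
              ≤ (ENNReal.ofReal (‖z‖ ^ (γ * q) * ‖y‖ ^ (γ * (1 - q))))⁻¹ := by
                gcongr
            _ = (ENNReal.ofReal (‖z‖ ^ (γ * q)) *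
                  ENNReal.ofReal (‖y‖ ^ (γ * (1 - q))))⁻¹ := by
                rw [ENNReal.ofReal_mul (by positivity)]
            _ = (ENNReal.ofReal (‖y‖ ^ (γ * (1 - q))))⁻¹ *
                  (ENNReal.ofReal (‖z‖ ^ (γ * q)))⁻¹ := by
                rw [ENNReal.mul_inv (Or.inr ENNReal.ofReal_ne_top)
                  (Or.inl ENNReal.ofReal_ne_top), mul_comm]
      _ = (ENNReal.ofReal (‖y‖ ^ (γ * (1 - q))))⁻¹ *
            ∫⁻ z in {z : EuclideanSpace ℝ (Fin n) | ‖y‖ ≤ ‖z‖ ∧ ‖z‖ < R},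
              (ENNReal.ofReal (‖z‖ ^ (γ * q)))⁻¹ ∂σ :=
          lintegral_const_mul _ hmeas
      _ ≤ (ENNReal.ofReal (‖y‖ ^ (γ * (1 - q))))⁻¹ * A := by
          gcongr
          apply lintegral_mono_set
          intro z hz
          simpa [mem_ball_zero_iff] using hz.2
  calc (∫⁻ y in ball (0 : EuclideanSpace ℝ (Fin n)) R,
          (∫⁻ z in {z : EuclideanSpace ℝ (Fin n) | ‖y‖ ≤ ‖z‖ ∧ ‖z‖ < R},
            (ENNReal.ofReal (‖z‖ ^ γ))⁻¹ ∂σ) ^ p ∂σ)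
      ≤ ∫⁻ y in ball (0 : EuclideanSpace ℝ (Fin n)) R,
          ((ENNReal.ofReal (‖y‖ ^ (γ * (1 - q))))⁻¹ * A) ^ p ∂σ := by
        apply lintegral_mono
        intro y
        exact ENNReal.rpow_le_rpow (step1 y) hp.le
    _ = ∫⁻ y in ball (0 : EuclideanSpace ℝ (Fin n)) R,
          A ^ p * (ENNReal.ofReal (‖y‖ ^ (γ * q)))⁻¹ ∂σ := by
        apply lintegral_congr
        intro y
        rw [ENNReal.mul_rpow_of_nonneg _ _ hp.le, ENNReal.inv_rpow,
          ENNReal.ofReal_rpow_of_nonneg (by positivity) hp.le,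
          ← Real.rpow_mul (norm_nonneg y), hexp, mul_comm]
    _ = A ^ p * A := by
        rw [lintegral_const_mul _ hmeas]
    _ = A ^ (p + 1) := by
        rw [ENNReal.rpow_add_of_nonneg p 1 hp.le zero_le_one, ENNReal.rpow_one]
    _ = A ^ (1 / (1 - q)) := by
        congr 1
        rw [hpdef]; field_simp; ring
end

section
/- Let 0 < q < 1 and 0 < 2α < n, and let σ be a nonnegative locally finite Borel measure on ℝⁿ satisfying, for all x ∈ ℝⁿ and r > 0, ∫_{B(x,r/2)} (I_{2α}σ)^{q/(1-q)} dσ ≤ c σ(B(x,r)) (1 + ∫_r^∞ σ(B(x,t))/t^{n-2α} dt/t)^{q/(1-q)}. Then there exists κ = κ(α,n,q,c) such that the pointwise condition I_{2α}((I_{2α}σ)^{q/(1-q)} dσ) ≤ κ ( I_{2α}σ + (I_{2α}σ)^{1/(1-q)} ) holds everywhere. -/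
open MeasureTheory Metric Set

/-- The Riesz potential `I_{2α}μ(x) = ∫_0^∞ μ(B(x,t))/t^{n-2α} dt/t`. -/
noncomputable def riesz2 {n : ℕ} (α : ℝ)
    (μ : Measure (EuclideanSpace ℝ (Fin n)))
    (x : EuclideanSpace ℝ (Fin n)) : ENNReal :=
  ∫⁻ t in Ioi (0:ℝ),
    μ (ball x t) / ENNReal.ofReal (t ^ ((n : ℝ) - 2 * α)) / ENNReal.ofReal t

/-! With `f = (I_{2α}σ)^p`, `p = q/(1-q)` and `A = I_{2α}σ(x)`, the hypothesis at radius `2t`,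
whose tail integral is at most `A`, gives `(fσ)(B(x,t)) ≤ c (1 + A)^p σ(B(x,2t))`. Integrating
against `t^{2α-n} dt/t` and substituting `t ↦ 2t` yields
`I_{2α}(fσ)(x) ≤ c 2^{n-2α} (1 + A)^p A`, and `(1 + A)^p A ≤ 2^p (A + A^{p+1})` with
`p + 1 = 1/(1-q)`. -/

open scoped ENNReal

theorem setLIntegral_comp_mul_left_Ioi_zero (g : ℝ → ℝ≥0∞) {a : ℝ} (ha : 0 < a) :
    ∫⁻ t in Ioi 0, g (a * t) = ENNReal.ofReal a⁻¹ * ∫⁻ t in Ioi 0, g t := by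
  have hemb : MeasurableEmbedding (a * ·) := (Homeomorph.mulLeft₀ a ha.ne').measurableEmbedding
  have h := hemb.restrict_map volume (Ioi 0)
  rw [Real.map_volume_mul_left ha.ne', abs_of_pos (inv_pos.2 ha), Measure.restrict_smul,
    preimage_const_mul_Ioi₀ _ ha, zero_div] at h
  rw [← smul_eq_mul, ← lintegral_smul_measure, h, hemb.lintegral_map]

theorem ENNReal.div_ofReal_rpow_div_ofReal_eq_mul {m : ℝ≥0∞} {a t : ℝ} (β : ℝ) (ha : 0 < a)
    (ht : 0 < t) :
    m / ENNReal.ofReal (t ^ β) / ENNReal.ofReal t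
      = ENNReal.ofReal (a ^ β) * ENNReal.ofReal a *
          (m / ENNReal.ofReal ((a * t) ^ β) / ENNReal.ofReal (a * t)) := by
  have haβ : ENNReal.ofReal (a ^ β) ≠ 0 := by simpa using Real.rpow_pos_of_pos ha β
  have ha' : ENNReal.ofReal a ≠ 0 := by simpa using ha
  rw [Real.mul_rpow ha.le ht.le, ENNReal.ofReal_mul (by positivity), ENNReal.ofReal_mul ha.le]
  simp only [div_eq_mul_inv, ENNReal.mul_inv (Or.inl haβ) (Or.inl ENNReal.ofReal_ne_top),
    ENNReal.mul_inv (Or.inl ha') (Or.inl ENNReal.ofReal_ne_top)]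
  calc _ = ENNReal.ofReal (a ^ β) * (ENNReal.ofReal (a ^ β))⁻¹ *
          (ENNReal.ofReal a * (ENNReal.ofReal a)⁻¹) *
          (m * (ENNReal.ofReal (t ^ β))⁻¹ * (ENNReal.ofReal t)⁻¹) := by
        rw [ENNReal.mul_inv_cancel haβ ENNReal.ofReal_ne_top,
          ENNReal.mul_inv_cancel ha' ENNReal.ofReal_ne_top, one_mul, one_mul]
    _ = _ := by ring

theorem ENNReal.one_add_rpow_mul_le (A : ℝ≥0∞) {p : ℝ} (hp : 0 ≤ p) :
    (1 + A) ^ p * A ≤ 2 ^ p * (A + A ^ (p + 1)) := by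
  rcases le_total A 1 with hA | hA
  · calc (1 + A) ^ p * A ≤ 2 ^ p * A := by
          gcongr
          calc 1 + A ≤ 1 + 1 := by gcongr
            _ = 2 := one_add_one_eq_two
      _ ≤ 2 ^ p * (A + A ^ (p + 1)) := by gcongr; exact le_self_add
  · calc (1 + A) ^ p * A ≤ (2 * A) ^ p * A := by
          gcongr
          calc 1 + A ≤ A + A := by gcongr
            _ = 2 * A := (two_mul A).symm
      _ = 2 ^ p * A ^ (p + 1) := by
          rw [ENNReal.mul_rpow_of_nonneg _ _ hp, ENNReal.rpow_add_of_nonneg _ _ hp zero_le_one,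
            ENNReal.rpow_one, mul_assoc]
      _ ≤ 2 ^ p * (A + A ^ (p + 1)) := by gcongr; exact le_add_self

section Riesz

variable {n : ℕ} (α : ℝ)

theorem setLIntegral_ball_mul_left_eq_riesz2 (μ : Measure (EuclideanSpace ℝ (Fin n)))
    (x : EuclideanSpace ℝ (Fin n)) {a : ℝ} (ha : 0 < a) :
    ∫⁻ t in Ioi 0, μ (ball x (a * t)) / ENNReal.ofReal (t ^ ((n : ℝ) - 2 * α)) / ENNReal.ofReal t
      = ENNReal.ofReal (a ^ ((n : ℝ) - 2 * α)) * riesz2 α μ x := by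
  rw [setLIntegral_congr_fun measurableSet_Ioi
      fun t ht => ENNReal.div_ofReal_rpow_div_ofReal_eq_mul _ ha ht,
    lintegral_const_mul' _ _ (by finiteness), setLIntegral_comp_mul_left_Ioi_zero
      (fun s => μ (ball x s) / ENNReal.ofReal (s ^ ((n : ℝ) - 2 * α)) / ENNReal.ofReal s) ha,
    riesz2,
    mul_assoc, ← mul_assoc (ENNReal.ofReal a), ← ENNReal.ofReal_mul ha.le,
    mul_inv_cancel₀ ha.ne', ENNReal.ofReal_one, one_mul]

theorem riesz2_le_of_ball_le {μ ν : Measure (EuclideanSpace ℝ (Fin n))}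
    {x : EuclideanSpace ℝ (Fin n)} {K : ℝ≥0∞} {a : ℝ} (ha : 0 < a)
    (h : ∀ t, 0 < t → μ (ball x t) ≤ K * ν (ball x (a * t))) :
    riesz2 α μ x ≤ K * ENNReal.ofReal (a ^ ((n : ℝ) - 2 * α)) * riesz2 α ν x := by
  have hmeas : Measurable fun t : ℝ =>
      ν (ball x (a * t)) / ENNReal.ofReal (t ^ ((n : ℝ) - 2 * α)) / ENNReal.ofReal t := by
    have hmono : Monotone fun t : ℝ => ν (ball x (a * t)) :=
      fun s t hst => measure_mono (ball_subset_ball (by gcongr))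
    exact (hmono.measurable.div (measurable_id.pow_const _).ennreal_ofReal).div
      measurable_id.ennreal_ofReal
  calc riesz2 α μ x
      ≤ ∫⁻ t in Ioi 0, K *
          (ν (ball x (a * t)) / ENNReal.ofReal (t ^ ((n : ℝ) - 2 * α)) / ENNReal.ofReal t) := by
        refine setLIntegral_mono' measurableSet_Ioi fun t ht => ?_
        rw [← mul_div_assoc, ← mul_div_assoc]
        gcongr
        exact h t ht
    _ = K * ENNReal.ofReal (a ^ ((n : ℝ) - 2 * α)) * riesz2 α ν x := by
        rw [lintegral_const_mul _ hmeas, setLIntegral_ball_mul_left_eq_riesz2 α ν x ha, mul_assoc]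

end Riesz

theorem stmt18_general {n : ℕ} (α q : ℝ) (σ : Measure (EuclideanSpace ℝ (Fin n)))
    (hq : 0 < q) (hq1 : q < 1)
    (c : ENNReal) (hc : c ≠ ⊤)
    (hyp : ∀ (x : EuclideanSpace ℝ (Fin n)) (r : ℝ), 0 < r →
      (∫⁻ y in ball x (r / 2), (riesz2 α σ y) ^ (q / (1 - q)) ∂σ)
        ≤ c * σ (ball x r) *
          (1 + ∫⁻ t in Ioi r,
            σ (ball x t) / ENNReal.ofReal (t ^ ((n : ℝ) - 2 * α)) /
              ENNReal.ofReal t) ^ (q / (1 - q))) :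
    ∃ κ : ENNReal, 0 < κ ∧ κ ≠ ⊤ ∧
      ∀ x : EuclideanSpace ℝ (Fin n),
        riesz2 α (σ.withDensity fun y => (riesz2 α σ y) ^ (q / (1 - q))) x
          ≤ κ * (riesz2 α σ x + (riesz2 α σ x) ^ (1 / (1 - q))) := by
  have hq1' : 0 < 1 - q := sub_pos.2 hq1
  have hp1 : q / (1 - q) + 1 = 1 / (1 - q) := by rw [div_add_one hq1'.ne', add_sub_cancel]
  set p := q / (1 - q)
  have hp : 0 ≤ p := div_nonneg hq.le hq1'.le
  set C := c * ENNReal.ofReal (2 ^ ((n : ℝ) - 2 * α)) * 2 ^ p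
  refine ⟨1 + C, by positivity, by finiteness, fun x => ?_⟩
  set A := riesz2 α σ x
  have hball : ∀ t, 0 < t → σ.withDensity (fun y => riesz2 α σ y ^ p) (ball x t)
      ≤ c * (1 + A) ^ p * σ (ball x (2 * t)) := by
    intro t ht
    have htail := hyp x (2 * t) (by positivity)
    rw [mul_div_cancel_left₀ t two_ne_zero] at htail
    rw [withDensity_apply _ measurableSet_ball, mul_right_comm]
    refine htail.trans ?_
    gcongr
    exact lintegral_mono_set (Ioi_subset_Ioi (by positivity))
  calc riesz2 α (σ.withDensity fun y => riesz2 α σ y ^ p) x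
      ≤ c * (1 + A) ^ p * ENNReal.ofReal (2 ^ ((n : ℝ) - 2 * α)) * A :=
        riesz2_le_of_ball_le α two_pos hball
    _ = c * ENNReal.ofReal (2 ^ ((n : ℝ) - 2 * α)) * ((1 + A) ^ p * A) := by ring
    _ ≤ c * ENNReal.ofReal (2 ^ ((n : ℝ) - 2 * α)) * (2 ^ p * (A + A ^ (p + 1))) :=
        mul_le_mul_right (ENNReal.one_add_rpow_mul_le A hp) _
    _ = C * (A + A ^ (1 / (1 - q))) := by rw [hp1, ← mul_assoc]
    _ ≤ (1 + C) * (A + A ^ (1 / (1 - q))) := by gcongr; exact le_add_self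

theorem stmt18 {n : ℕ} (α q : ℝ) (σ : Measure (EuclideanSpace ℝ (Fin n)))
    [IsLocallyFiniteMeasure σ]
    (hq : 0 < q) (hq1 : q < 1) (hα : 0 < α) (hαn : 2 * α < n)
    (c : ENNReal) (hc : c ≠ ⊤)
    (hyp : ∀ (x : EuclideanSpace ℝ (Fin n)) (r : ℝ), 0 < r →
      (∫⁻ y in ball x (r / 2), (riesz2 α σ y) ^ (q / (1 - q)) ∂σ)
        ≤ c * σ (ball x r) *
          (1 + ∫⁻ t in Ioi r,
            σ (ball x t) / ENNReal.ofReal (t ^ ((n : ℝ) - 2 * α)) /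
              ENNReal.ofReal t) ^ (q / (1 - q))) :
    ∃ κ : ENNReal, 0 < κ ∧ κ ≠ ⊤ ∧
      ∀ x : EuclideanSpace ℝ (Fin n),
        riesz2 α (σ.withDensity fun y => (riesz2 α σ y) ^ (q / (1 - q))) x
          ≤ κ * (riesz2 α σ x + (riesz2 α σ x) ^ (1 / (1 - q))) :=
  stmt18_general α q σ hq hq1 c hc hyp
end

section
/- Let 0 < q < p-1, 1 < p < ∞, 0 < α < n/p, and let σ be a nonnegative locally finite Borel measure on ℝⁿ with W_{α,p}σ not identically infinite. Then there exists a constant c₀ > 0 depending only on n, p, q, α such that w = c₀ (W_{α,p}σ)^{(p-1)/(p-1-q)} satisfies w ≤ W_{α,p}(w^q dσ) everywhere, i.e. w is a subsolution of the equation u = W_{α,p}(u^q dσ). -/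
/-!
Write `f_x(t) = (σ(B(x,t))/t^{n-αp})^{1/(p-1)}/t` for the integrand of `W_{α,p}σ(x)` and
`G_x(t) = ∫_t^∞ f_x` for its tail. For `y ∈ B(x,t)` and `s > t` we have `B(x,s) ⊆ B(y,2s)`, so
`G_x(t) ≤ M · W_{α,p}σ(y)` with `M = 2^{(n-αp)/(p-1)}`. Hence the density of `w^q dσ`, where
`w = c₀ (W_{α,p}σ)^γ` and `γ = (p-1)/(p-1-q)`, is at least `(c₀ M^{-γ} G_x(t)^γ)^q` on `B(x,t)`, and
`W_{α,p}(w^q dσ)(x) ≥ c₀^{q/(p-1)} M^{-β} ∫_0^∞ f_x G_x^β` with `β = γq/(p-1) = γ - 1`.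
For any tail `G` of a nonnegative `f`, `∫_0^∞ f G^β ≥ (G(0)/2)^{1+β}`: until `G` drops to `G(0)/2`
the integrand is at least `f · (G(0)/2)^β`, and that stretch carries half of the mass.
Since `q/(p-1) < 1`, the equation `c₀ = c₀^{q/(p-1)} M^{-β} 2^{-γ}` has a solution in `(0, ∞)`.
-/

open MeasureTheory Metric Set

open Filter
open scoped ENNReal Topology

section TailInequality

variable {ν : Measure ℝ} [NullSingletonClass ν]

lemma measure_le_of_forall_measure_Ioi_le {T : Set ℝ} {c : ℝ≥0∞} (hbdd : BddBelow T)
    (hT : ∀ t ∈ T, ν (Ioi t) ≤ c) : ν T ≤ c := by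
  rcases T.eq_empty_or_nonempty with rfl | hne
  · simp
  obtain ⟨u, hu_anti, -, hu_lim, hu_mem⟩ :=
    (isGLB_csInf hne hbdd).exists_seq_antitone_tendsto hne
  calc ν T ≤ ν (Ici (sInf T)) := measure_mono fun t ht => csInf_le hbdd ht
    _ = ν (⋃ n, Ioi (u n)) := by
        rw [measure_congr Ioi_ae_eq_Ici.symm, (isGLB_of_tendsto_atTop hu_anti hu_lim).iUnion_Ioi_eq]
    _ = ⨆ n, ν (Ioi (u n)) := Monotone.measure_iUnion fun i j hij => Ioi_subset_Ioi (hu_anti hij)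
    _ ≤ c := iSup_le fun n => hT _ (hu_mem n)

lemma rpow_le_setLIntegral_measure_Ioi_rpow (a : ℝ) {β : ℝ} (hβ : 0 ≤ β) {c : ℝ≥0∞}
    (hc : c ≠ ⊤) (h2c : c + c ≤ ν (Ioi a)) :
    c ^ (1 + β) ≤ ∫⁻ t in Ioi a, ν (Ioi t) ^ β ∂ν := by
  set U := Ioi a ∩ {t | c < ν (Ioi t)}
  have hanti : Antitone fun t => ν (Ioi t) := fun s t hst => measure_mono (Ioi_subset_Ioi hst)
  have hU : MeasurableSet U := measurableSet_Ioi.inter (hanti.measurable measurableSet_Ioi)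
  have hrest : ν (Ioi a \ U) ≤ c :=
    measure_le_of_forall_measure_Ioi_le ⟨a, fun t ht => ht.1.out.le⟩
      fun t ht => not_lt.mp fun h => ht.2 ⟨ht.1, h⟩
  have hcU : c ≤ ν U := by
    refine ENNReal.le_of_add_le_add_right hc (h2c.trans ?_)
    calc ν (Ioi a) = ν (U ∪ (Ioi a \ U)) := by rw [union_sdiff_cancel inter_subset_left]
      _ ≤ ν U + ν (Ioi a \ U) := measure_union_le _ _
      _ ≤ ν U + c := by gcongr
  calc c ^ (1 + β) = c ^ β * c := by
        rw [ENNReal.rpow_add_of_nonneg _ _ zero_le_one hβ, ENNReal.rpow_one, mul_comm]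
    _ ≤ c ^ β * ν U := by gcongr
    _ = ∫⁻ _ in U, c ^ β ∂ν := (setLIntegral_const _ _).symm
    _ ≤ ∫⁻ t in U, ν (Ioi t) ^ β ∂ν :=
        setLIntegral_mono' hU fun t ht => ENNReal.rpow_le_rpow ht.2.le hβ
    _ ≤ ∫⁻ t in Ioi a, ν (Ioi t) ^ β ∂ν := lintegral_mono_set inter_subset_left

lemma measure_Ioi_div_two_rpow_le_setLIntegral (a : ℝ) {β : ℝ} (hβ : 0 ≤ β) :
    (ν (Ioi a) / 2) ^ (1 + β) ≤ ∫⁻ t in Ioi a, ν (Ioi t) ^ β ∂ν := by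
  rcases eq_or_ne (ν (Ioi a) / 2) 0 with h0 | h0
  · rw [h0, ENNReal.zero_rpow_of_pos (by linarith)]
    exact zero_le
  have := nhdsLT_neBot_of_exists_lt ⟨0, pos_iff_ne_zero.mpr h0⟩
  refine le_of_tendsto
    (ENNReal.continuous_rpow_const.continuousWithinAt (s := Iio (ν (Ioi a) / 2))).tendsto ?_
  filter_upwards [self_mem_nhdsWithin] with c hc
  refine rpow_le_setLIntegral_measure_Ioi_rpow a hβ hc.out.ne_top ?_
  rw [← two_mul, mul_comm]
  exact (ENNReal.lt_div_iff_mul_lt (by norm_num) (by norm_num)).mp hc |>.le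

end TailInequality

lemma setLIntegral_Ioi_div_two_rpow_le {f : ℝ → ℝ≥0∞} (hf : Measurable f) {β : ℝ}
    (hβ : 0 ≤ β) :
    ((∫⁻ t in Ioi 0, f t) / 2) ^ (1 + β)
      ≤ ∫⁻ t in Ioi 0, f t * (∫⁻ s in Ioi t, f s) ^ β := by
  set ν := volume.withDensity f
  have hν : ∀ t, ν (Ioi t) = ∫⁻ s in Ioi t, f s :=
    fun _ => withDensity_apply _ measurableSet_Ioi
  have hanti : Antitone fun t => ν (Ioi t) := fun s t hst => measure_mono (Ioi_subset_Ioi hst)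
  simp only [← hν]
  calc (ν (Ioi 0) / 2) ^ (1 + β) ≤ ∫⁻ t in Ioi 0, ν (Ioi t) ^ β ∂ν :=
        measure_Ioi_div_two_rpow_le_setLIntegral 0 hβ
    _ = ∫⁻ t in Ioi 0, f t * ν (Ioi t) ^ β :=
        setLIntegral_withDensity_eq_setLIntegral_mul _ hf (hanti.measurable.pow_const β)
          measurableSet_Ioi

lemma lintegral_Ioi_comp_mul_left (g : ℝ → ℝ≥0∞) (a : ℝ) {b : ℝ} (hb : 0 < b) :
    ∫⁻ x in Ioi a, g (b * x) = ENNReal.ofReal b⁻¹ * ∫⁻ x in Ioi (b * a), g x := by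
  have hemb : MeasurableEmbedding (b * ·) :=
    (Homeomorph.mulLeft₀ b hb.ne').isClosedEmbedding.measurableEmbedding
  rw [← abs_of_pos (inv_pos.mpr hb), ← smul_eq_mul, ← lintegral_smul_measure,
    ← Measure.restrict_smul, ← Real.map_volume_mul_left hb.ne', hemb.restrict_map,
    hemb.lintegral_map, preimage_const_mul_Ioi₀ _ hb, mul_div_cancel_left₀ _ hb.ne']

section Wolff

variable {n : ℕ} (α p : ℝ)

noncomputable def wolffKernel (σ : Measure (EuclideanSpace ℝ (Fin n)))
    (x : EuclideanSpace ℝ (Fin n)) (t : ℝ) : ℝ≥0∞ :=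
  (σ (ball x t) / ENNReal.ofReal (t ^ ((n : ℝ) - α * p))) ^ (1 / (p - 1)) / ENNReal.ofReal t

noncomputable def wolffDoublingConst (n : ℕ) : ℝ≥0∞ :=
  ENNReal.ofReal (2 ^ ((n : ℝ) - α * p)) ^ (1 / (p - 1))

variable {α p} {σ μ : Measure (EuclideanSpace ℝ (Fin n))} {x y : EuclideanSpace ℝ (Fin n)}

lemma wolff_eq_setLIntegral_wolffKernel :
    wolff α p σ x = ∫⁻ t in Ioi 0, wolffKernel α p σ x t := rfl

lemma measurable_wolffKernel : Measurable (wolffKernel α p σ x) := by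
  have hmono : Monotone fun t : ℝ => σ (ball x t) :=
    fun _ _ h => measure_mono (ball_subset_ball h)
  unfold wolffKernel
  exact ((hmono.measurable.div (by fun_prop)).pow_const _).div (by fun_prop)

lemma wolffDoublingConst_ne_zero : wolffDoublingConst α p n ≠ 0 :=
  (ENNReal.rpow_pos (ENNReal.ofReal_pos.mpr (by positivity)) ENNReal.ofReal_ne_top).ne'

lemma wolffDoublingConst_ne_top (hp : 1 ≤ p) : wolffDoublingConst α p n ≠ ⊤ :=
  ENNReal.rpow_ne_top_of_nonneg (one_div_nonneg.mpr (by linarith)) ENNReal.ofReal_ne_top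

lemma wolffKernel_le_of_ball_subset (hp : 1 ≤ p) {r : ℝ} (hr : 0 < r)
    (h : ball x r ⊆ ball y (2 * r)) :
    wolffKernel α p σ x r ≤ 2 * wolffDoublingConst α p n * wolffKernel α p σ y (2 * r) := by
  have he : 0 ≤ 1 / (p - 1) := one_div_nonneg.mpr (by linarith)
  set A := ENNReal.ofReal (2 ^ ((n : ℝ) - α * p))
  set B := ENNReal.ofReal (r ^ ((n : ℝ) - α * p))
  have hA0 : A ≠ 0 := (ENNReal.ofReal_pos.mpr (by positivity)).ne'
  have h2r : ENNReal.ofReal ((2 * r) ^ ((n : ℝ) - α * p)) = A * B := by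
    rw [Real.mul_rpow zero_le_two hr.le, ENNReal.ofReal_mul (by positivity)]
  have hA : σ (ball y (2 * r)) / B = A * (σ (ball y (2 * r)) / (A * B)) := by
    rw [← mul_div_assoc, ENNReal.mul_div_mul_left _ _ hA0 ENNReal.ofReal_ne_top]
  calc wolffKernel α p σ x r
      ≤ (σ (ball y (2 * r)) / B) ^ (1 / (p - 1)) / ENNReal.ofReal r := by
        unfold wolffKernel; gcongr
    _ = 2 * A ^ (1 / (p - 1)) * (σ (ball y (2 * r)) / (A * B)) ^ (1 / (p - 1))
          / (2 * ENNReal.ofReal r) := by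
        rw [hA, ENNReal.mul_rpow_of_nonneg _ _ he, mul_assoc,
          ENNReal.mul_div_mul_left _ _ two_ne_zero ENNReal.ofNat_ne_top]
    _ = 2 * wolffDoublingConst α p n * wolffKernel α p σ y (2 * r) := by
        rw [wolffKernel, wolffDoublingConst, h2r, ENNReal.ofReal_mul zero_le_two,
          ENNReal.ofReal_ofNat, mul_div_assoc]

lemma setLIntegral_Ioi_wolffKernel_le (hp : 1 ≤ p) {t : ℝ} (ht : 0 < t) (hy : y ∈ ball x t) :
    ∫⁻ r in Ioi t, wolffKernel α p σ x r ≤ wolffDoublingConst α p n * wolff α p σ y := by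
  set M := wolffDoublingConst α p n
  have hball : ∀ r ∈ Ioi t, ball x r ⊆ ball y (2 * r) := fun r hr z hz => by
    rw [mem_ball] at hz hy ⊢
    linarith [dist_triangle z x y, dist_comm x y, mem_Ioi.mp hr]
  calc ∫⁻ r in Ioi t, wolffKernel α p σ x r
      ≤ ∫⁻ r in Ioi t, 2 * M * wolffKernel α p σ y (2 * r) :=
        setLIntegral_mono' measurableSet_Ioi fun r hr =>
          wolffKernel_le_of_ball_subset hp (ht.trans hr) (hball r hr)
    _ ≤ ∫⁻ r in Ioi 0, 2 * M * wolffKernel α p σ y (2 * r) :=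
        lintegral_mono_set (Ioi_subset_Ioi ht.le)
    _ = 2 * M * (ENNReal.ofReal 2⁻¹ * wolff α p σ y) := by
        rw [lintegral_const_mul' _ _ (ENNReal.mul_ne_top ENNReal.ofNat_ne_top
          (wolffDoublingConst_ne_top hp)), lintegral_Ioi_comp_mul_left _ _ two_pos, mul_zero,
          wolff_eq_setLIntegral_wolffKernel]
    _ = M * wolff α p σ y := by
        rw [ENNReal.ofReal_inv_of_pos two_pos, ENNReal.ofReal_ofNat, mul_comm 2 M, mul_assoc,
          ← mul_assoc 2, ENNReal.mul_inv_cancel two_ne_zero ENNReal.ofNat_ne_top, one_mul]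

lemma rpow_mul_wolffKernel_le (hp : 1 ≤ p) {m : ℝ≥0∞} {t : ℝ}
    (h : m * σ (ball x t) ≤ μ (ball x t)) :
    m ^ (1 / (p - 1)) * wolffKernel α p σ x t ≤ wolffKernel α p μ x t := by
  have he : 0 ≤ 1 / (p - 1) := one_div_nonneg.mpr (by linarith)
  unfold wolffKernel
  rw [← mul_div_assoc, ← ENNReal.mul_rpow_of_nonneg _ _ he, ← mul_div_assoc]
  gcongr

lemma mul_measure_le_withDensity_apply {X : Type*} [MeasurableSpace X] {ν : Measure X}
    {w : X → ℝ≥0∞} {s : Set X} (hs : MeasurableSet s) {m : ℝ≥0∞}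
    (h : ∀ y ∈ s, m ≤ w y) :
    m * ν s ≤ ν.withDensity w s := by
  rw [withDensity_apply _ hs, ← setLIntegral_const]
  exact setLIntegral_mono' hs h

lemma rpow_mul_setLIntegral_le_wolff_withDensity (hp : 1 ≤ p) {γ q : ℝ} (hγ : 0 ≤ γ)
    (hq : 0 ≤ q) (c₀ : ℝ≥0∞) (x : EuclideanSpace ℝ (Fin n)) :
    c₀ ^ (q / (p - 1)) * (wolffDoublingConst α p n)⁻¹ ^ (γ * q / (p - 1)) *
        ∫⁻ t in Ioi 0, wolffKernel α p σ x t *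
          (∫⁻ s in Ioi t, wolffKernel α p σ x s) ^ (γ * q / (p - 1))
      ≤ wolff α p (σ.withDensity fun y => (c₀ * wolff α p σ y ^ γ) ^ q) x := by
  set M := wolffDoublingConst α p n
  set G : ℝ → ℝ≥0∞ := fun t => ∫⁻ s in Ioi t, wolffKernel α p σ x s
  have he : 0 ≤ 1 / (p - 1) := one_div_nonneg.mpr (by linarith)
  have hconst : ∀ t, ((c₀ * (M⁻¹ * G t) ^ γ) ^ q) ^ (1 / (p - 1))
      = c₀ ^ (q / (p - 1)) * M⁻¹ ^ (γ * q / (p - 1)) * G t ^ (γ * q / (p - 1)) := by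
    intro t
    rw [ENNReal.mul_rpow_of_nonneg _ _ hγ, ENNReal.mul_rpow_of_nonneg _ _ hq,
      ENNReal.mul_rpow_of_nonneg _ _ he, ENNReal.mul_rpow_of_nonneg _ _ hq,
      ENNReal.mul_rpow_of_nonneg _ _ he, ← ENNReal.rpow_mul, ← ENNReal.rpow_mul,
      ← ENNReal.rpow_mul, ← ENNReal.rpow_mul, ← ENNReal.rpow_mul, mul_assoc]
    ring_nf
  refine (lintegral_const_mul_le _ _).trans
    (setLIntegral_mono' measurableSet_Ioi fun t ht => ?_)
  calc _ = ((c₀ * (M⁻¹ * G t) ^ γ) ^ q) ^ (1 / (p - 1)) * wolffKernel α p σ x t := by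
        rw [hconst]; ring
    _ ≤ _ := by
      refine rpow_mul_wolffKernel_le hp (mul_measure_le_withDensity_apply measurableSet_ball ?_)
      intro y hy
      gcongr
      rw [ENNReal.inv_mul_le_iff wolffDoublingConst_ne_zero (wolffDoublingConst_ne_top hp)]
      exact setLIntegral_Ioi_wolffKernel_le hp ht hy

end Wolff

lemma ENNReal.exists_pos_eq_rpow_mul {θ : ℝ} (hθ : θ < 1) {L : ℝ≥0∞} (hL0 : L ≠ 0)
    (hLt : L ≠ ⊤) : ∃ c : ℝ≥0∞, 0 < c ∧ c ≠ ⊤ ∧ c = c ^ θ * L := by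
  have hθ' : 0 < 1 - θ := by linarith
  refine ⟨L ^ (1 / (1 - θ)), ENNReal.rpow_pos (pos_iff_ne_zero.mpr hL0) hLt,
    ENNReal.rpow_ne_top_of_nonneg (by positivity) hLt, ?_⟩
  calc L ^ (1 / (1 - θ)) = L ^ (1 / (1 - θ) * θ + 1) := by congr 1; field_simp; ring
    _ = L ^ (1 / (1 - θ) * θ) * L ^ (1 : ℝ) := ENNReal.rpow_add _ _ hL0 hLt
    _ = (L ^ (1 / (1 - θ))) ^ θ * L := by rw [ENNReal.rpow_mul, ENNReal.rpow_one]

theorem stmt19_general {n : ℕ} (α p q : ℝ) (σ : Measure (EuclideanSpace ℝ (Fin n)))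
    (hp : 1 < p) (hq : 0 < q) (hqp : q < p - 1) :
    ∃ c₀ : ENNReal, 0 < c₀ ∧ c₀ ≠ ⊤ ∧
      ∀ x : EuclideanSpace ℝ (Fin n),
        c₀ * (wolff α p σ x) ^ ((p - 1) / (p - 1 - q))
          ≤ wolff α p
              (σ.withDensity fun y =>
                (c₀ * (wolff α p σ y) ^ ((p - 1) / (p - 1 - q))) ^ q) x := by
  have hp1 : 0 < p - 1 := by linarith
  have hpq : 0 < p - 1 - q := by linarith
  set γ := (p - 1) / (p - 1 - q)
  set β := q / (p - 1 - q)
  have hγ : 0 < γ := by positivity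
  have hβ : 0 ≤ β := by positivity
  have hγβ : γ = 1 + β := by simp only [γ, β]; field_simp; ring
  have hβq : γ * q / (p - 1) = β := by simp only [γ, β]; field_simp
  set M := wolffDoublingConst α p n
  have hM0 : M ≠ 0 := wolffDoublingConst_ne_zero
  have hMt : M ≠ ⊤ := wolffDoublingConst_ne_top hp.le
  obtain ⟨c₀, hc₀, hc₀_top, hfix⟩ :=
    ENNReal.exists_pos_eq_rpow_mul ((div_lt_one hp1).mpr hqp) (L := M⁻¹ ^ β * (2 ^ γ)⁻¹)
      (by simp [hMt, hβ]) (ENNReal.mul_ne_top (by simp [hM0, hβ]) (by simp))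
  refine ⟨c₀, hc₀, hc₀_top, fun x => ?_⟩
  have hlow :=
    rpow_mul_setLIntegral_le_wolff_withDensity (α := α) (σ := σ) hp.le hγ.le hq.le c₀ x
  rw [hβq] at hlow
  calc c₀ * wolff α p σ x ^ γ
      = c₀ ^ (q / (p - 1)) * M⁻¹ ^ β * (wolff α p σ x / 2) ^ (1 + β) := by
        rw [← hγβ, ENNReal.div_rpow_of_nonneg _ _ hγ.le,
          div_eq_mul_inv (wolff α p σ x ^ γ)]
        nth_rw 1 [hfix]
        ring
    _ ≤ _ := by
        gcongr
        rw [wolff_eq_setLIntegral_wolffKernel]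
        exact setLIntegral_Ioi_div_two_rpow_le measurable_wolffKernel hβ
    _ ≤ _ := hlow

theorem stmt19 {n : ℕ} (α p q : ℝ) (σ : Measure (EuclideanSpace ℝ (Fin n)))
    [IsLocallyFiniteMeasure σ]
    (hp : 1 < p) (hα : 0 < α) (hαn : α < n / p) (hq : 0 < q) (hqp : q < p - 1)
    (hW : ∃ x, wolff α p σ x ≠ ⊤) :
    ∃ c₀ : ENNReal, 0 < c₀ ∧ c₀ ≠ ⊤ ∧
      ∀ x : EuclideanSpace ℝ (Fin n),
        c₀ * (wolff α p σ x) ^ ((p - 1) / (p - 1 - q))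
          ≤ wolff α p
              (σ.withDensity fun y =>
                (c₀ * (wolff α p σ y) ^ ((p - 1) / (p - 1 - q))) ^ q) x :=
  stmt19_general α p q σ hp hq hqp
end
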